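/- arXiv:2305.17288 — 2 statements merged into one kernel-verified Lean document; each statement's English description precedes it below -/
import Mathlib

section
/- Let κ > 0 and n ≥ 2. Define J(r) = (2/√κ)·arcsin(√((n+1)/(2n))·sin(√κ·r)) for r ∈ (0, π/(4√κ)). Then the function r ↦ J(r)/r is strictly decreasing on (0, π/(4√κ)). -/
/-!
Put `c = √((n+1)/(2n)) ∈ (0, 1)` and `h(s) = arcsin (c sin s)`, so that `J(r) = (2/√κ) h(√κ r)`.
The derivative `h'(s) = c cos s / √(1 - c² sin² s)` is strictly decreasing on `(0, π/2)`,
since `cos² s / (1 - c² sin² s) = (1 - u) / (1 - c² u)` decreases in `u = sin² s`.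
Hence `h` is strictly concave on `[0, π/2]`, and as `h 0 = 0` its secant slope `h(s)/s` from the
origin strictly decreases; rescaling `s = √κ r` gives the claim.
-/

open Real Set

theorem StrictConcaveOn.strictAntiOn_div_self {s : Set ℝ} {f : ℝ → ℝ}
    (hf : StrictConcaveOn ℝ s f) (h0 : (0 : ℝ) ∈ s) (hf0 : f 0 = 0) :
    StrictAntiOn (fun x => f x / x) (s ∩ Ioi 0) := by
  intro x hx y hy hxy
  simpa [hf0] using hf.secant_strict_mono h0 hx.1 hy.1 hx.2.ne' hy.2.ne' hxy

theorem StrictAntiOn.const_mul_comp_mul_div_self {g : ℝ → ℝ} {b k m : ℝ}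
    (hg : StrictAntiOn (fun s => g s / s) (Ioo 0 b)) (hm : 0 < m) (hk : 0 < k) :
    StrictAntiOn (fun r => m * g (k * r) / r) (Ioo 0 (b / k)) := by
  have hmem {r : ℝ} (hr : r ∈ Ioo 0 (b / k)) : k * r ∈ Ioo 0 b :=
    ⟨mul_pos hk hr.1, (lt_div_iff₀' hk).1 hr.2⟩
  have hrw {r : ℝ} (hr : r ≠ 0) : m * g (k * r) / r = m * k * (g (k * r) / (k * r)) := by
    field_simp
  intro x hx y hy hxy
  simp only [hrw hx.1.ne', hrw hy.1.ne']
  exact mul_lt_mul_of_pos_left (hg (hmem hx) (hmem hy) (mul_lt_mul_of_pos_left hxy hk))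
    (mul_pos hm hk)

theorem hasDerivAt_arcsin_mul_sin {c : ℝ} (hc : |c| < 1) (s : ℝ) :
    HasDerivAt (fun s => arcsin (c * sin s)) (c * cos s / √(1 - (c * sin s) ^ 2)) s := by
  have hlt : |c * sin s| < 1 := by
    rw [abs_mul]
    exact (mul_le_of_le_one_right (abs_nonneg c) (abs_sin_le_one s)).trans_lt hc
  have hderiv := (hasDerivAt_arcsin (abs_lt.1 hlt).1.ne' (abs_lt.1 hlt).2.ne).comp s
    ((hasDerivAt_sin s).const_mul c)
  exact hderiv.congr_deriv (by ring)

theorem strictAntiOn_mul_cos_div_sqrt {c : ℝ} (hc0 : 0 < c) (hc1 : c < 1) :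
    StrictAntiOn (fun s => c * cos s / √(1 - (c * sin s) ^ 2)) (Ioo 0 (π / 2)) := by
  have hpos (s : ℝ) : 0 < 1 - (c * sin s) ^ 2 := by
    nlinarith [sin_sq_le_one s, mul_pos hc0 hc0]
  have hrw {s : ℝ} (hs : s ∈ Ioo 0 (π / 2)) :
      c * cos s / √(1 - (c * sin s) ^ 2) = c * √(cos s ^ 2 / (1 - (c * sin s) ^ 2)) := by
    have hcos : 0 ≤ cos s := cos_nonneg_of_mem_Icc ⟨by linarith [hs.1, pi_pos], hs.2.le⟩
    rw [sqrt_div' _ (hpos s).le, sqrt_sq hcos, mul_div_assoc]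
  intro x hx y hy hxy
  have hsin : sin x < sin y :=
    sin_lt_sin_of_lt_of_le_pi_div_two (by linarith [hx.1, pi_pos]) hy.2.le hxy
  have hsin0 : 0 < sin x := sin_pos_of_pos_of_lt_pi hx.1 (by linarith [hx.2, pi_pos])
  have hquot : cos y ^ 2 / (1 - (c * sin y) ^ 2) < cos x ^ 2 / (1 - (c * sin x) ^ 2) := by
    have hsq : sin x ^ 2 < sin y ^ 2 := pow_lt_pow_left₀ hsin hsin0.le two_ne_zero
    have hc2 : c ^ 2 < 1 := by nlinarith
    rw [div_lt_div_iff₀ (hpos y) (hpos x), cos_sq', cos_sq']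
    nlinarith [mul_pos (sub_pos.2 hc2) (sub_pos.2 hsq)]
  simp only [hrw hx, hrw hy]
  exact mul_lt_mul_of_pos_left (sqrt_lt_sqrt (div_nonneg (sq_nonneg _) (hpos y).le) hquot) hc0

theorem strictConcaveOn_arcsin_mul_sin {c : ℝ} (hc0 : 0 < c) (hc1 : c < 1) :
    StrictConcaveOn ℝ (Icc 0 (π / 2)) (fun s => arcsin (c * sin s)) := by
  have hc : |c| < 1 := abs_lt.2 ⟨by linarith, hc1⟩
  refine StrictAntiOn.strictConcaveOn_of_deriv (convex_Icc _ _)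
    (fun s _ => (hasDerivAt_arcsin_mul_sin hc s).continuousAt.continuousWithinAt) ?_
  rw [interior_Icc]
  convert strictAntiOn_mul_cos_div_sqrt hc0 hc1 using 1
  funext s
  exact (hasDerivAt_arcsin_mul_sin hc s).deriv

/-- For `κ > 0`, `n ≥ 2`, the function `r ↦ J(r)/r` with
`J(r) = (2/√κ)·arcsin(√((n+1)/(2n))·sin(√κ·r))` is strictly decreasing on `(0, π/(4√κ))`. -/
theorem J_div_r_strictAnti (κ : ℝ) (hκ : 0 < κ) (n : ℕ) (hn : 2 ≤ n) :
    StrictAntiOn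
      (fun r : ℝ =>
        ((2 / Real.sqrt κ) *
          Real.arcsin (Real.sqrt (((n : ℝ) + 1) / (2 * n)) * Real.sin (Real.sqrt κ * r))) / r)
      (Set.Ioo 0 (Real.pi / (4 * Real.sqrt κ))) := by
  have hn' : (2 : ℝ) ≤ n := by exact_mod_cast hn
  have hsqrtκ : 0 < √κ := sqrt_pos.2 hκ
  have hc0 : 0 < √(((n : ℝ) + 1) / (2 * n)) := sqrt_pos.2 (by positivity)
  have hc1 : √(((n : ℝ) + 1) / (2 * n)) < 1 := by
    rw [sqrt_lt' one_pos, one_pow, div_lt_one (by positivity)]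
    linarith
  have hslope := (strictConcaveOn_arcsin_mul_sin hc0 hc1).strictAntiOn_div_self
    ⟨le_rfl, by positivity⟩ (by simp)
  have hsub : Ioo 0 (π / 4) ⊆ Icc 0 (π / 2) ∩ Ioi 0 :=
    fun s hs => ⟨⟨hs.1.le, by linarith [hs.2, pi_pos]⟩, hs.1⟩
  simpa only [div_div] using
    (hslope.mono hsub).const_mul_comp_mul_div_self (div_pos two_pos hsqrtκ) hsqrtκ
end

section
/- Let κ > 0 and n ≥ 2, and let J(r) = (2/√κ)·arcsin(√((n+1)/(2n))·sin(√κ·r)). Then for every r ∈ (0, π/(4√κ)], we have J(r)/r ≥ 4/3. -/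
open Real

/-! Put `t = √κ r ∈ (0, π/4]`. Since the coefficient `√((n+1)/(2n))` is at least `√2/2`, it
suffices that `sin (2t/3) ≤ sin t / √2`, which holds with equality at `t = π/4`
(where `arcsin (sin (π/4) / √2) = π/6`). Writing `t = 3s`, this reads
`√2 · 2 sin s cos s ≤ sin s · (2 cos 2s + 1)`, and after squaring it becomes
`4 cos² 2s ≥ 3`, i.e. `cos 2s ≥ cos (π/6)`, which is exactly `s ≤ π/12`. -/

lemma sqrt_two_mul_sin_two_mul_le_sin_three_mul {s : ℝ} (hs₀ : 0 ≤ s) (hs : s ≤ π / 12) :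
    √2 * sin (2 * s) ≤ sin (3 * s) := by
  have hsin : 0 ≤ sin s := sin_nonneg_of_nonneg_of_le_pi hs₀ (by linarith [pi_pos])
  have hcos : √3 / 2 ≤ cos (2 * s) := by
    rw [← cos_pi_div_six]
    exact cos_le_cos_of_nonneg_of_le_pi (by linarith) (by linarith [pi_pos]) (by linarith)
  have hfactor : √2 * (2 * cos s) ≤ 2 * cos (2 * s) + 1 := by
    refine le_of_pow_le_pow_left₀ two_ne_zero (by linarith [sqrt_nonneg 3]) ?_
    have h3 : 3 ≤ 4 * cos (2 * s) ^ 2 := by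
      nlinarith [sq_sqrt (show (0 : ℝ) ≤ 3 by norm_num), sqrt_nonneg 3]
    rw [mul_pow, sq_sqrt zero_le_two, mul_pow, cos_sq s]
    nlinarith
  calc √2 * sin (2 * s) = sin s * (√2 * (2 * cos s)) := by rw [sin_two_mul]; ring
    _ ≤ sin s * (2 * cos (2 * s) + 1) := mul_le_mul_of_nonneg_left hfactor hsin
    _ = sin (3 * s) := by
      rw [sin_three_mul, cos_two_mul]
      linear_combination (4 * sin s) * sin_sq_add_cos_sq s

lemma two_div_three_mul_le_arcsin_mul_sin {c t : ℝ} (hc : √2 / 2 ≤ c) (ht₀ : 0 ≤ t)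
    (ht : t ≤ π / 4) : 2 / 3 * t ≤ arcsin (c * sin t) := by
  rw [le_arcsin_iff_sin_le' ⟨by linarith [pi_pos], by linarith [pi_pos]⟩]
  obtain ⟨s, rfl⟩ : ∃ s, t = 3 * s := ⟨t / 3, by ring⟩
  have hsin : √2 * sin (2 * s) ≤ sin (3 * s) :=
    sqrt_two_mul_sin_two_mul_le_sin_three_mul (by linarith) (by linarith)
  calc sin (2 / 3 * (3 * s)) = sin (2 * s) := by ring_nf
    _ ≤ √2 / 2 * sin (3 * s) := by
      have h := mul_le_mul_of_nonneg_left hsin (sqrt_nonneg 2)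
      rw [← mul_assoc, mul_self_sqrt zero_le_two] at h
      linarith
    _ ≤ c * sin (3 * s) :=
      mul_le_mul_of_nonneg_right hc (sin_nonneg_of_nonneg_of_le_pi ht₀ (by linarith [pi_pos]))

lemma sqrt_two_div_two_le_sqrt_add_one_div {x : ℝ} (hx : 0 < x) :
    √2 / 2 ≤ √((x + 1) / (2 * x)) := by
  rw [le_sqrt' (by positivity), div_pow, sq_sqrt zero_le_two, le_div_iff₀ (by positivity)]
  linarith

/-- For `κ > 0`, `n ≥ 2`, and `r ∈ (0, π/(4√κ)]`, we have `J(r)/r ≥ 4/3` where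
`J(r) = (2/√κ)·arcsin(√((n+1)/(2n))·sin(√κ·r))`. -/
theorem J_div_r_ge (κ : ℝ) (hκ : 0 < κ) (n : ℕ) (hn : 2 ≤ n) (r : ℝ)
    (hr : r ∈ Set.Ioc 0 (Real.pi / (4 * Real.sqrt κ))) :
    ((2 / Real.sqrt κ) *
        Real.arcsin (Real.sqrt (((n : ℝ) + 1) / (2 * n)) * Real.sin (Real.sqrt κ * r))) / r
      ≥ 4 / 3 := by
  obtain ⟨hr₀, hr⟩ := hr
  have hκ' : 0 < √κ := sqrt_pos.2 hκ
  have ht : √κ * r ≤ π / 4 := by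
    rw [le_div_iff₀ (by positivity)] at hr
    linarith
  have hn' : (0 : ℝ) < n := by exact_mod_cast (by omega : 0 < n)
  have harcsin := two_div_three_mul_le_arcsin_mul_sin
    (sqrt_two_div_two_le_sqrt_add_one_div hn') (by positivity) ht
  rw [ge_iff_le, le_div_iff₀ hr₀]
  calc 4 / 3 * r = 2 / √κ * (2 / 3 * (√κ * r)) := by field_simp; ring
    _ ≤ _ := by gcongr
end
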